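/- arXiv:1510.09203 — 2 statements merged into one kernel-verified Lean document; each statement's English description precedes it below -/
import Mathlib

section
/- Let G be a finite directed graph with positive arc lengths, S ⊆ V a set of sinks, and D : A → ℝ a labeling such that every arc (i,j) with head j ∉ S has a successor arc (j,k), k ≠ i, with D(j,k) ≤ D(i,j) − ℓ(i,j). Then from the head of every arc of G there is a directed path (along arcs of G) reaching some vertex of S. In particular, every weakly connected component of G containing at least one arc contains a vertex of S. -/
/-- Under the no-island labeling condition, from the head of every arc there is a directed
path reaching some sink vertex of `S`. -/
theorem stmt_1 {V : Type*} [Fintype V] (A : V → V → Prop) (S : Set V)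
    (ℓ : V → V → ℝ) (D : V → V → ℝ)
    (hℓ : ∀ i j, A i j → 0 < ℓ i j)
    (hsucc : ∀ i j, A i j → j ∉ S →
      ∃ k, k ≠ i ∧ A j k ∧ D j k ≤ D i j - ℓ i j) :
    ∀ i j, A i j → ∃ s ∈ S, Relation.ReflTransGen A j s := by
  classical
  suffices h : ∀ n i j, A i j →
      (Finset.univ.filter (fun p : V × V => A p.1 p.2 ∧ D p.1 p.2 < D i j)).card ≤ n →
      ∃ s ∈ S, Relation.ReflTransGen A j s by
    intro i j hij
    exact h _ i j hij le_rfl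
  intro n
  induction n with
  | zero =>
    intro i j hij hcard
    by_cases hjS : j ∈ S
    · exact ⟨j, hjS, Relation.ReflTransGen.refl⟩
    · obtain ⟨k, -, hjk, hD⟩ := hsucc i j hij hjS
      have hlt : D j k < D i j := lt_of_le_of_lt hD (by linarith [hℓ i j hij])
      have : (j, k) ∈ Finset.univ.filter
          (fun p : V × V => A p.1 p.2 ∧ D p.1 p.2 < D i j) := by
        simp [hjk, hlt]
      have := Finset.card_pos.mpr ⟨_, this⟩
      omega
  | succ n ih =>
    intro i j hij hcard
    by_cases hjS : j ∈ S
    · exact ⟨j, hjS, Relation.ReflTransGen.refl⟩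
    · obtain ⟨k, -, hjk, hD⟩ := hsucc i j hij hjS
      have hlt : D j k < D i j := lt_of_le_of_lt hD (by linarith [hℓ i j hij])
      have hss : (Finset.univ.filter (fun p : V × V => A p.1 p.2 ∧ D p.1 p.2 < D j k))
          ⊂ (Finset.univ.filter (fun p : V × V => A p.1 p.2 ∧ D p.1 p.2 < D i j)) := by
        constructor
        · intro p hp
          simp only [Finset.mem_filter] at hp ⊢
          exact ⟨hp.1, hp.2.1, hp.2.2.trans hlt⟩
        · intro hsub
          have : (j, k) ∈ Finset.univ.filter
              (fun p : V × V => A p.1 p.2 ∧ D p.1 p.2 < D j k) := by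
            apply hsub; simp [hjk, hlt]
          simp at this
      have hcard' := Finset.card_lt_card hss
      obtain ⟨s, hsS, hks⟩ := ih j k hjk (by omega)
      exact ⟨s, hsS, Relation.ReflTransGen.head hjk hks⟩
end

section
/- Let G be a finite bidirected graph (arcs in both directions for each edge) with sink set S and no-island labeling D with positive lengths. Then every active vertex (endpoint of an active arc) is connected by an undirected path of active edges to some sink vertex. -/
/-- Main validity guarantee: in an undirected active network whose bidirected arcs carry a
no-island labeling with positive lengths relative to the sink set `S`, every active vertex
(endpoint of an active edge) is connected by an undirected path of active edges to some
sink vertex. -/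
theorem stmt_18 {V : Type*} [Fintype V] (H : SimpleGraph V) (S : Set V)
    (ℓ : V → V → ℝ) (D : V → V → ℝ)
    (hℓ : ∀ i j, H.Adj i j → 0 < ℓ i j)
    (hsucc : ∀ i j, H.Adj i j → j ∉ S →
      ∃ k, k ≠ i ∧ H.Adj j k ∧ D j k ≤ D i j - ℓ i j) :
    ∀ v : V, (∃ w, H.Adj v w) → ∃ s ∈ S, H.Reachable v s := by
  classical
  have key : ∀ n : ℕ, ∀ i j, H.Adj i j →
      (Finset.univ.filter (fun a : V × V => H.Adj a.1 a.2 ∧ D a.1 a.2 < D i j)).card ≤ n →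
      ∃ s ∈ S, H.Reachable j s := by
    intro n
    induction n with
    | zero =>
      intro i j hij hcard
      by_cases hjS : j ∈ S
      · exact ⟨j, hjS, SimpleGraph.Reachable.refl j⟩
      · obtain ⟨k, hk, hjk, hD⟩ := hsucc i j hij hjS
        have hlt : D j k < D i j := lt_of_le_of_lt hD (by linarith [hℓ i j hij])
        have hmem : (j, k) ∈ Finset.univ.filter
            (fun a : V × V => H.Adj a.1 a.2 ∧ D a.1 a.2 < D i j) := by
          simp [hjk, hlt]
        have := Finset.card_pos.mpr ⟨_, hmem⟩
        omega
    | succ n ih =>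
      intro i j hij hcard
      by_cases hjS : j ∈ S
      · exact ⟨j, hjS, SimpleGraph.Reachable.refl j⟩
      · obtain ⟨k, hk, hjk, hD⟩ := hsucc i j hij hjS
        have hlt : D j k < D i j := lt_of_le_of_lt hD (by linarith [hℓ i j hij])
        have hsub : (Finset.univ.filter
            (fun a : V × V => H.Adj a.1 a.2 ∧ D a.1 a.2 < D j k)) ⊂
            (Finset.univ.filter
            (fun a : V × V => H.Adj a.1 a.2 ∧ D a.1 a.2 < D i j)) := by
          constructor
          · intro a ha
            simp only [Finset.mem_filter, Finset.mem_univ, true_and] at ha ⊢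
            exact ⟨ha.1, lt_trans ha.2 hlt⟩
          · intro hcon
            have hmem : (j, k) ∈ Finset.univ.filter
                (fun a : V × V => H.Adj a.1 a.2 ∧ D a.1 a.2 < D i j) := by
              simp [hjk, hlt]
            have := hcon hmem
            simp at this
        have hcard' := Finset.card_lt_card hsub
        obtain ⟨s, hs, hreach⟩ := ih j k hjk (by omega)
        exact ⟨s, hs, (hjk.reachable).trans hreach⟩
  rintro v ⟨w, hvw⟩
  exact key (Fintype.card (V × V)) w v hvw.symm
    (Finset.card_le_univ _)
end
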